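/- arXiv:2205.14388 — 4 statements merged into one kernel-verified Lean document; each statement's English description precedes it below -/
import Mathlib

section
/- With the notation of the Lasry–Lions approximation: if f : X → ℝ is bounded and α-Hölder along H with seminorm [f]_α and α ∈ (0,1), then for every ε > 0 and every x ∈ X one has 0 ≤ f(x) − f_ε(x) ≤ c_α · [f]_α^{2/(2−α)} · ε^{α/(2−α)}, where c_α > 0 is a constant depending only on α. -/
/-- The Lasry–Lions type approximation
`f_ε(x) = sup_{h ∈ H} ( inf_{k ∈ H} ( f(x + h - k) + ‖k‖_H²/(2ε) ) - ‖h‖_H²/ε )`. -/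
noncomputable def LLapprox {X H : Type*} [AddCommGroup X] [Module ℝ X]
    [NormedAddCommGroup H] [InnerProductSpace ℝ H]
    (ι : H →ₗ[ℝ] X) (f : X → ℝ) (ε : ℝ) (x : X) : ℝ :=
  ⨆ h : H, ((⨅ k : H, (f (x + ι h - ι k) + ‖k‖ ^ 2 / (2 * ε))) - ‖h‖ ^ 2 / ε)

/-- Young-type inequality: `Cf * t^α ≤ t^2/(2ε) + 2 Cf^{2/(2-α)} ε^{α/(2-α)}`. -/
lemma young_like (α Cf ε t : ℝ) (hα0 : 0 < α) (hα1 : α < 1) (hCf : 0 ≤ Cf)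
    (hε : 0 < ε) (ht : 0 ≤ t) :
    Cf * t ^ α ≤ t ^ 2 / (2 * ε) + 2 * Cf ^ ((2:ℝ) / (2 - α)) * ε ^ (α / (2 - α)) := by
  have h2α : 0 < 2 - α := by linarith
  have hβ0 : 0 < α / (2 - α) := by positivity
  have hβ1 : α / (2 - α) ≤ 1 := by
    rw [div_le_one h2α]; linarith
  rcases le_or_gt (t ^ (2 - α)) (2 * ε * Cf) with hcase | hcase
  · have h1 : t ^ α ≤ (2 * ε * Cf) ^ (α / (2 - α)) := by
      have : t ^ α = (t ^ (2 - α)) ^ (α / (2 - α)) := by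
        rw [← Real.rpow_mul ht]
        congr 1
        field_simp
      rw [this]
      exact Real.rpow_le_rpow (Real.rpow_nonneg ht _) hcase hβ0.le
    have h2 : (2 * ε * Cf) ^ (α / (2 - α))
        = (2:ℝ) ^ (α / (2 - α)) * ε ^ (α / (2 - α)) * Cf ^ (α / (2 - α)) := by
      rw [Real.mul_rpow (by positivity) hCf, Real.mul_rpow (by norm_num) hε.le]
    have h3 : (2:ℝ) ^ (α / (2 - α)) ≤ 2 := by
      calc (2:ℝ) ^ (α / (2 - α)) ≤ (2:ℝ) ^ (1:ℝ) :=
            Real.rpow_le_rpow_of_exponent_le (by norm_num) hβ1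
        _ = 2 := Real.rpow_one 2
    have h4 : Cf * Cf ^ (α / (2 - α)) = Cf ^ ((2:ℝ) / (2 - α)) := by
      rw [← Real.rpow_one_add' hCf (by positivity)]
      congr 1
      field_simp
      ring
    have h5 : Cf * t ^ α ≤ Cf * ((2:ℝ) ^ (α / (2 - α)) * ε ^ (α / (2 - α)) * Cf ^ (α / (2 - α))) := by
      rw [← h2]; exact mul_le_mul_of_nonneg_left h1 hCf
    have h6 : Cf * ((2:ℝ) ^ (α / (2 - α)) * ε ^ (α / (2 - α)) * Cf ^ (α / (2 - α)))
        ≤ 2 * Cf ^ ((2:ℝ) / (2 - α)) * ε ^ (α / (2 - α)) := by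
      rw [← h4]
      have hεnn : (0:ℝ) ≤ ε ^ (α / (2 - α)) := Real.rpow_nonneg hε.le _
      have hCnn : (0:ℝ) ≤ Cf ^ (α / (2 - α)) := Real.rpow_nonneg hCf _
      nlinarith [mul_nonneg (sub_nonneg.mpr h3) (mul_nonneg (mul_nonneg hCf hεnn) hCnn)]
    have h7 : (0:ℝ) ≤ t ^ 2 / (2 * ε) := by positivity
    linarith
  · have ht0 : 0 < t := by
      rcases ht.lt_or_eq with h | h
      · exact h
      · exfalso
        rw [← h, Real.zero_rpow (by positivity : (2:ℝ) - α ≠ 0)] at hcase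
        nlinarith
    have h1 : Cf * t ^ α ≤ t ^ (2 - α) / (2 * ε) * t ^ α := by
      have : Cf ≤ t ^ (2 - α) / (2 * ε) := by
        rw [le_div_iff₀ (by positivity)]
        nlinarith
      exact mul_le_mul_of_nonneg_right this (Real.rpow_nonneg ht _)
    have h2 : t ^ (2 - α) / (2 * ε) * t ^ α = t ^ 2 / (2 * ε) := by
      rw [div_mul_eq_mul_div, ← Real.rpow_add ht0]
      norm_num
    have h3 : (0:ℝ) ≤ 2 * Cf ^ ((2:ℝ) / (2 - α)) * ε ^ (α / (2 - α)) := by positivity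
    linarith [h1.trans_eq h2]

/-- for every `α ∈ (0,1)` there is a constant `c_α > 0` depending only on `α`
such that whenever `f : X → ℝ` is bounded and `α`-Hölder along `H` with Hölder seminorm
bounded by `Cf`, one has `0 ≤ f(x) - f_ε(x) ≤ c_α · Cf^{2/(2-α)} · ε^{α/(2-α)}`
for every `ε > 0` and `x ∈ X`. -/
theorem stmt_2 (α : ℝ) (hα : α ∈ Set.Ioo (0:ℝ) 1) :
    ∃ c : ℝ, 0 < c ∧
      ∀ (X H : Type) [NormedAddCommGroup X] [InnerProductSpace ℝ X]
        [NormedAddCommGroup H] [InnerProductSpace ℝ H]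
        (ι : H →ₗ[ℝ] X) (f : X → ℝ),
        (∃ C : ℝ, ∀ y : X, |f y| ≤ C) →
        ∀ Cf : ℝ, 0 ≤ Cf →
        (∀ (x : X) (h : H), |f (x + ι h) - f x| ≤ Cf * ‖h‖ ^ α) →
        ∀ ε : ℝ, 0 < ε → ∀ x : X,
          0 ≤ f x - LLapprox ι f ε x ∧
          f x - LLapprox ι f ε x ≤ c * Cf ^ ((2:ℝ) / (2 - α)) * ε ^ (α / (2 - α)) := by
  obtain ⟨hα0, hα1⟩ := hα
  refine ⟨2, by norm_num, ?_⟩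
  intro X H _ _ _ _ ι f hb Cf hCf hHolder ε hε x
  obtain ⟨C, hC⟩ := hb
  set F : H → ℝ := fun h => (⨅ k : H, (f (x + ι h - ι k) + ‖k‖ ^ 2 / (2 * ε))) - ‖h‖ ^ 2 / ε
    with hF
  have hbdd : ∀ h : H, BddBelow (Set.range fun k : H => f (x + ι h - ι k) + ‖k‖ ^ 2 / (2 * ε)) := by
    intro h
    refine ⟨-C, ?_⟩
    rintro _ ⟨k, rfl⟩
    have h1 := (abs_le.mp (hC (x + ι h - ι k))).1
    have h2 : (0:ℝ) ≤ ‖k‖ ^ 2 / (2 * ε) := by positivity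
    linarith
  have hFle : ∀ h : H, F h ≤ f x := by
    intro h
    have h1 : (⨅ k : H, (f (x + ι h - ι k) + ‖k‖ ^ 2 / (2 * ε)))
        ≤ f (x + ι h - ι h) + ‖h‖ ^ 2 / (2 * ε) := ciInf_le (hbdd h) h
    have h2 : x + ι h - ι h = x := by abel
    rw [h2] at h1
    have h3 : ‖h‖ ^ 2 / (2 * ε) ≤ ‖h‖ ^ 2 / ε := by
      apply div_le_div_of_nonneg_left (by positivity) hε
      linarith
    simp only [hF]
    linarith
  have hbddsup : BddAbove (Set.range F) := ⟨f x, by rintro _ ⟨h, rfl⟩; exact hFle h⟩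
  have hsup_le : LLapprox ι f ε x ≤ f x := ciSup_le hFle
  constructor
  · linarith
  · have hlow : f x - 2 * Cf ^ ((2:ℝ) / (2 - α)) * ε ^ (α / (2 - α)) ≤ F 0 := by
      have h1 : f x - 2 * Cf ^ ((2:ℝ) / (2 - α)) * ε ^ (α / (2 - α))
          ≤ ⨅ k : H, (f (x + ι 0 - ι k) + ‖k‖ ^ 2 / (2 * ε)) := by
        apply le_ciInf
        intro k
        have h2 : x + ι (0:H) - ι k = x - ι k := by rw [map_zero]; abel
        rw [h2]
        have h3 := (abs_le.mp (hHolder (x - ι k) k)).2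
        have h4 : x - ι k + ι k = x := by abel
        rw [h4] at h3
        have h5 := young_like α Cf ε ‖k‖ hα0 hα1 hCf hε (norm_nonneg k)
        linarith
      have h6 : F 0 = ⨅ k : H, (f (x + ι 0 - ι k) + ‖k‖ ^ 2 / (2 * ε)) := by
        simp [hF]
      linarith [h6 ▸ h1]
    have h7 : F 0 ≤ LLapprox ι f ε x := le_ciSup hbddsup 0
    have h8 := hlow.trans h7
    set B := 2 * Cf ^ ((2:ℝ) / (2 - α)) * ε ^ (α / (2 - α)) with hB
    linarith
end

section
/- With the notation of the Lasry–Lions approximation: for every ε > 0, x ∈ X and h ∈ H, one has f_ε(x+h) − f_ε(x) ≤ ‖h‖_H²/ε + 2√2 · c_α^{1/2} · [f]_α^{1/(2−α)} · ε^{(α−1)/(2−α)} · ‖h‖_H, where c_α is the constant from the approximation estimate 0 ≤ f − f_ε ≤ c_α [f]_α^{2/(2−α)} ε^{α/(2−α)}. In particular f_ε is Lipschitz along H with constant controlled by ε^{(α−1)/(2−α)} (up to the quadratic term). -/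
open scoped RealInnerProductSpace
theorem aux_scalar (ε T nh t ip A Lx I fx : ℝ) (hε : 0 < ε) (hT : 0 ≤ T)
    (hnh : 0 ≤ nh) (hip : ip ≤ t * nh) (hTA : 2 * (A * ε) = T ^ 2)
    (h1 : I - t ^ 2 / ε ≤ Lx) (hI2 : I ≤ fx + t ^ 2 / (2 * ε)) (hfx : fx ≤ Lx + A) :
    I - (t ^ 2 - 2 * ip + nh ^ 2) / ε ≤ Lx + (nh ^ 2 / ε + 2 * T / ε * nh) := by
  have hεne : ε ≠ 0 := ne_of_gt hε
  have m1 : I * ε - t ^ 2 ≤ Lx * ε := by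
    have h := mul_le_mul_of_nonneg_right h1 hε.le
    rw [sub_mul, div_mul_cancel₀ _ hεne] at h
    linarith
  have m2 : 2 * (I * ε) ≤ 2 * (fx * ε) + t ^ 2 := by
    have h := mul_le_mul_of_nonneg_right hI2 (by linarith : (0:ℝ) ≤ 2 * ε)
    rw [add_mul, div_mul_cancel₀ _ (by positivity : (2:ℝ) * ε ≠ 0)] at h
    nlinarith [h]
  have hmain : I * ε ≤ Lx * ε + (t ^ 2 - 2 * ip + nh ^ 2) + (nh ^ 2 + 2 * T * nh) := by
    rcases le_total t (T + nh) with hcase | hcase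
    · nlinarith [mul_le_mul_of_nonneg_right hcase hnh]
    · have hfε : 2 * (fx * ε) ≤ 2 * (Lx * ε) + T ^ 2 := by
        nlinarith [mul_le_mul_of_nonneg_right hfx (by linarith : (0:ℝ) ≤ 2 * ε)]
      rcases le_total T (4 * nh) with hc2 | hc2
      · nlinarith [sq_nonneg (t - 2 * nh), mul_nonneg hT (by linarith : (0:ℝ) ≤ 4 * nh - T)]
      · have p1 : (0:ℝ) ≤ t - T - nh := by linarith
        have p2 : (0:ℝ) ≤ t + T - 3 * nh := by linarith
        nlinarith [mul_nonneg p1 p2, mul_nonneg hT hnh, sq_nonneg nh]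
  calc I - (t ^ 2 - 2 * ip + nh ^ 2) / ε
      = (I * ε - (t ^ 2 - 2 * ip + nh ^ 2)) / ε := by field_simp
    _ ≤ (Lx * ε + (nh ^ 2 + 2 * T * nh)) / ε := by
        apply div_le_div_of_nonneg_right (by linarith) hε.le
    _ = Lx + (nh ^ 2 / ε + 2 * T / ε * nh) := by field_simp

/-- with `f : X → ℝ` bounded and `α`-Hölder along `H` (seminorm bounded by
`Cf`, `α ∈ (0,1)`), and `c > 0` the constant from the approximation estimate
`0 ≤ f - f_ε ≤ c · Cf^{2/(2-α)} · ε^{α/(2-α)}`, one has, for every `ε > 0`, `x ∈ X`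
and `h ∈ H`:
`f_ε(x+h) - f_ε(x) ≤ ‖h‖²/ε + 2√2 · c^{1/2} · Cf^{1/(2-α)} · ε^{(α-1)/(2-α)} · ‖h‖`. -/
theorem stmt_3 {X H : Type*} [NormedAddCommGroup X] [InnerProductSpace ℝ X]
    [NormedAddCommGroup H] [InnerProductSpace ℝ H]
    (ι : H →ₗ[ℝ] X) (f : X → ℝ) (α : ℝ) (hα : α ∈ Set.Ioo (0:ℝ) 1)
    (hbdd : ∃ C : ℝ, ∀ y : X, |f y| ≤ C)
    (Cf : ℝ) (hCf : 0 ≤ Cf)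
    (hHolder : ∀ (x : X) (h : H), |f (x + ι h) - f x| ≤ Cf * ‖h‖ ^ α)
    (c : ℝ) (hc : 0 < c)
    (happrox : ∀ ε : ℝ, 0 < ε → ∀ x : X,
      0 ≤ f x - LLapprox ι f ε x ∧
      f x - LLapprox ι f ε x ≤ c * Cf ^ ((2:ℝ) / (2 - α)) * ε ^ (α / (2 - α))) :
    ∀ ε : ℝ, 0 < ε → ∀ (x : X) (h : H),
      LLapprox ι f ε (x + ι h) - LLapprox ι f ε x ≤
        ‖h‖ ^ 2 / ε +
          2 * Real.sqrt 2 * c ^ ((1:ℝ)/2) * Cf ^ ((1:ℝ) / (2 - α)) *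
            ε ^ ((α - 1) / (2 - α)) * ‖h‖ := by
  obtain ⟨C, hC⟩ := hbdd
  intro ε hε x h
  have h2α : (2:ℝ) - α ≠ 0 := by have := hα.2; intro hh; linarith
  set A : ℝ := c * Cf ^ ((2:ℝ) / (2 - α)) * ε ^ (α / (2 - α)) with hA
  set K : ℝ := 2 * Real.sqrt 2 * c ^ ((1:ℝ)/2) * Cf ^ ((1:ℝ) / (2 - α)) *
      ε ^ ((α - 1) / (2 - α)) with hK
  set T : ℝ := K * ε / 2 with hTdef
  have hK0 : 0 ≤ K := by rw [hK]; positivity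
  have hT0 : 0 ≤ T := by rw [hTdef]; positivity
  have hKT : K = 2 * T / ε := by rw [hTdef]; field_simp
  -- exponent algebra
  have e1 : ε ^ (α / (2 - α)) * ε = ε ^ ((2:ℝ) / (2 - α)) := by
    rw [show (2:ℝ) / (2 - α) = α / (2 - α) + 1 by field_simp; ring, Real.rpow_add hε, Real.rpow_one]
  have hsq2 : Real.sqrt 2 ^ 2 = 2 := Real.sq_sqrt (by norm_num)
  have hc2 : (c ^ ((1:ℝ)/2)) ^ 2 = c := by
    rw [← Real.rpow_natCast (c ^ ((1:ℝ)/2)) 2, ← Real.rpow_mul hc.le]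
    norm_num
  have hCf2 : (Cf ^ ((1:ℝ)/(2 - α))) ^ 2 = Cf ^ ((2:ℝ)/(2 - α)) := by
    rw [← Real.rpow_natCast (Cf ^ ((1:ℝ)/(2 - α))) 2, ← Real.rpow_mul hCf]
    norm_num
    congr 1
    ring
  have he2 : (ε ^ ((α - 1)/(2 - α))) ^ 2 * ε ^ 2 = ε ^ (α / (2 - α)) * ε := by
    rw [← Real.rpow_natCast (ε ^ ((α - 1)/(2 - α))) 2, ← Real.rpow_mul hε.le,
        ← Real.rpow_natCast ε 2, ← Real.rpow_add hε, e1]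
    congr 1
    push_cast
    field_simp
    ring
  have hTA : 2 * (A * ε) = T ^ 2 := by
    rw [hA, hTdef, hK]
    rw [show (2 * Real.sqrt 2 * c ^ ((1:ℝ)/2) * Cf ^ ((1:ℝ) / (2 - α)) *
        ε ^ ((α - 1) / (2 - α)) * ε / 2) ^ 2
      = Real.sqrt 2 ^ 2 * (c ^ ((1:ℝ)/2)) ^ 2 * (Cf ^ ((1:ℝ)/(2 - α))) ^ 2 *
        ((ε ^ ((α - 1)/(2 - α))) ^ 2 * ε ^ 2) by ring]
    rw [hsq2, hc2, hCf2, he2]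
    ring
  -- basic facts about the inf/sup
  have hlow : ∀ (x' : X) (u : H), BddBelow (Set.range fun k : H =>
      f (x' + ι u - ι k) + ‖k‖ ^ 2 / (2 * ε)) := by
    intro x' u
    refine ⟨-C, ?_⟩
    rintro _ ⟨k, rfl⟩
    have h1 := (abs_le.1 (hC (x' + ι u - ι k))).1
    have h2 : (0:ℝ) ≤ ‖k‖ ^ 2 / (2 * ε) := by positivity
    linarith
  have hIle : ∀ (x' : X) (u k : H),
      (⨅ k : H, (f (x' + ι u - ι k) + ‖k‖ ^ 2 / (2 * ε))) ≤
        f (x' + ι u - ι k) + ‖k‖ ^ 2 / (2 * ε) :=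
    fun x' u k => ciInf_le (hlow x' u) k
  have hFbdd : ∀ x' : X, BddAbove (Set.range fun u : H =>
      (⨅ k : H, (f (x' + ι u - ι k) + ‖k‖ ^ 2 / (2 * ε))) - ‖u‖ ^ 2 / ε) := by
    intro x'
    refine ⟨C, ?_⟩
    rintro _ ⟨u, rfl⟩
    have h1 := hIle x' u 0
    simp only [map_zero, sub_zero, norm_zero] at h1
    norm_num at h1
    have h2 := (abs_le.1 (hC (x' + ι u))).2
    have h3 : (0:ℝ) ≤ ‖u‖ ^ 2 / ε := by positivity
    simp only [Set.mem_setOf_eq]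
    linarith
  have hsup : ∀ (x' : X) (v : H),
      ((⨅ k : H, (f (x' + ι v - ι k) + ‖k‖ ^ 2 / (2 * ε))) - ‖v‖ ^ 2 / ε) ≤
        ⨆ w : H, ((⨅ k : H, (f (x' + ι w - ι k) + ‖k‖ ^ 2 / (2 * ε))) - ‖w‖ ^ 2 / ε) :=
    fun x' v => le_ciSup (hFbdd x') v
  -- main estimate
  rw [sub_le_iff_le_add']
  simp only [LLapprox]
  refine ciSup_le fun u => ?_
  have hfun : ∀ k : H, f (x + ι h + ι u - ι k) + ‖k‖ ^ 2 / (2 * ε)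
      = f (x + ι (h + u) - ι k) + ‖k‖ ^ 2 / (2 * ε) := by
    intro k
    rw [map_add, add_assoc]
  rw [iInf_congr hfun]
  have hu : ‖u‖ ^ 2 = ‖h + u‖ ^ 2 - 2 * ⟪h + u, h⟫ + ‖h‖ ^ 2 := by
    rw [← norm_sub_sq_real, add_sub_cancel_left]
  have h1 := hsup x (h + u)
  have hI2 : (⨅ k : H, (f (x + ι (h + u) - ι k) + ‖k‖ ^ 2 / (2 * ε))) ≤
      f x + ‖h + u‖ ^ 2 / (2 * ε) := by
    have := hIle x (h + u) (h + u)
    rwa [add_sub_cancel_right] at this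
  have hfx : f x ≤ (⨆ w : H, ((⨅ k : H, (f (x + ι w - ι k) + ‖k‖ ^ 2 / (2 * ε))) -
      ‖w‖ ^ 2 / ε)) + A := by
    have h3 := (happrox ε hε x).2
    rw [← hA] at h3
    simp only [LLapprox] at h3
    linarith
  rw [hu, hKT]
  exact aux_scalar ε T ‖h‖ ‖h + u‖ ⟪h + u, h⟫ A _ _ (f x) hε hT0 (norm_nonneg h)
    (real_inner_le_norm (h + u) h) hTA h1 hI2 hfx
end

section
/- Splitting estimate for Hölder regularity of the resolvent: let α ∈ (0,1), λ > 0, and suppose D₂ : (0,∞) × X → L with ‖D₂(t,x+h) − D₂(t,x)‖ ≤ 2K t^{−(2−α)/2} for all t > 0 (sup bound from the second derivative) and ‖D₂(t,x+h) − D₂(t,x)‖ ≤ K t^{−(3−α)/2} ‖h‖_H for all t > 0 (bound via the third derivative), with λ-exponential weights absorbed (i.e. assume e^{−λt} prefactors already make the displayed bounds integrable). Then for u₂(x) := ∫₀^∞ e^{−λt} D₂(t,x) dt (with λ large enough that e^{−λt} dominates any exponential growth), splitting the integral at t = ‖h‖_H², one gets ‖u₂(x+h) − u₂(x)‖ ≤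 (4K/α + 2K/(1−α)) ‖h‖_H^α for all x ∈ X and h ∈ H. -/
open Real MeasureTheory Set

/-- splitting estimate for Hölder regularity of the resolvent. Let
`α ∈ (0,1)`, `λ > 0` and `D₂ : (0,∞) × X → L` (with values in a Banach space `L` of
bilinear forms) satisfy, for all `t > 0`, `x ∈ X`, `h ∈ H`:
`‖D₂(t,x+h) − D₂(t,x)‖ ≤ 2K t^{−(2−α)/2}` and
`‖D₂(t,x+h) − D₂(t,x)‖ ≤ K t^{−(3−α)/2} ‖h‖_H`, with the weighted integrands
integrable. Then `u₂(x) := ∫₀^∞ e^{−λt} D₂(t,x) dt` satisfies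
`‖u₂(x+h) − u₂(x)‖ ≤ (4K/α + 2K/(1−α)) ‖h‖_H^α`. -/
theorem stmt_13 {X H L : Type*} [NormedAddCommGroup X] [InnerProductSpace ℝ X]
    [NormedAddCommGroup H] [InnerProductSpace ℝ H]
    [NormedAddCommGroup L] [NormedSpace ℝ L] [CompleteSpace L]
    (ι : H →ₗ[ℝ] X) (α lam K : ℝ) (hα : α ∈ Ioo (0:ℝ) 1) (hlam : 0 < lam) (hK : 0 < K)
    (D₂ : ℝ → X → L)
    (hint : ∀ x : X, IntegrableOn (fun t => exp (-(lam * t)) • D₂ t x) (Ioi 0))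
    (hb1 : ∀ t : ℝ, 0 < t → ∀ (x : X) (h : H),
      ‖D₂ t (x + ι h) - D₂ t x‖ ≤ 2 * K * t ^ (-(2 - α) / 2))
    (hb2 : ∀ t : ℝ, 0 < t → ∀ (x : X) (h : H),
      ‖D₂ t (x + ι h) - D₂ t x‖ ≤ K * t ^ (-(3 - α) / 2) * ‖h‖) :
    ∀ (x : X) (h : H),
      ‖(∫ t in Ioi (0:ℝ), exp (-(lam * t)) • D₂ t (x + ι h)) -
          ∫ t in Ioi (0:ℝ), exp (-(lam * t)) • D₂ t x‖ ≤
        (4 * K / α + 2 * K / (1 - α)) * ‖h‖ ^ α := by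
  obtain ⟨hα0, hα1⟩ := hα
  intro x h
  rcases eq_or_ne h 0 with rfl | hh
  · simp [Real.zero_rpow hα0.ne']
  have hrpos : (0:ℝ) < ‖h‖ := norm_pos_iff.mpr hh
  set r : ℝ := ‖h‖ with hrdef
  set s : ℝ := r ^ (2:ℝ) with hsdef
  have hspos : 0 < s := Real.rpow_pos_of_pos hrpos _
  set f : ℝ → L := fun t => exp (-(lam * t)) • (D₂ t (x + ι h) - D₂ t x) with hfdef
  have hf : IntegrableOn f (Ioi 0) := by
    have := (hint (x + ι h)).sub (hint x)
    simp only [hfdef, smul_sub]; exact this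
  have key : (∫ t in Ioi (0:ℝ), exp (-(lam * t)) • D₂ t (x + ι h)) -
      (∫ t in Ioi (0:ℝ), exp (-(lam * t)) • D₂ t x) = ∫ t in Ioi (0:ℝ), f t := by
    rw [← integral_sub (hint (x + ι h)) (hint x)]
    simp [hfdef, smul_sub]
  rw [key]
  have hsplit : (∫ t in Ioi (0:ℝ), f t) = (∫ t in Ioc 0 s, f t) + ∫ t in Ioi s, f t := by
    rw [← setIntegral_union (Ioc_disjoint_Ioi le_rfl) measurableSet_Ioi
      (hf.mono_set Ioc_subset_Ioi_self) (hf.mono_set (Ioi_subset_Ioi hspos.le)),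
      Ioc_union_Ioi_eq_Ioi hspos.le]
  rw [hsplit]
  have heb : ∀ t : ℝ, 0 < t → exp (-(lam * t)) ≤ 1 := by
    intro t ht
    rw [exp_le_one_iff]
    nlinarith [hlam.le, ht.le]
  -- bound on Ioc 0 s
  have h1 : ‖∫ t in Ioc 0 s, f t‖ ≤ 4 * K / α * r ^ α := by
    have hmaj : IntegrableOn (fun t : ℝ => 2 * K * t ^ (-(2 - α) / 2)) (Ioc 0 s) := by
      apply Integrable.const_mul
      have hi : IntervalIntegrable (fun t : ℝ => t ^ (-(2 - α) / 2)) volume 0 s :=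
        intervalIntegral.intervalIntegrable_rpow' (by linarith)
      rw [intervalIntegrable_iff_integrableOn_Ioc_of_le hspos.le] at hi
      exact hi
    have hbd : ∀ᵐ t ∂(volume.restrict (Ioc 0 s)), ‖f t‖ ≤ 2 * K * t ^ (-(2 - α) / 2) := by
      rw [ae_restrict_iff' measurableSet_Ioc]
      filter_upwards with t hts
      have ht0 : 0 < t := hts.1
      have : ‖f t‖ = exp (-(lam * t)) * ‖D₂ t (x + ι h) - D₂ t x‖ := by
        rw [hfdef]; simp [norm_smul, abs_of_pos (exp_pos _)]
      rw [this]
      calc exp (-(lam * t)) * ‖D₂ t (x + ι h) - D₂ t x‖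
          ≤ 1 * (2 * K * t ^ (-(2 - α) / 2)) := by
            apply mul_le_mul (heb t ht0) (hb1 t ht0 x h) (norm_nonneg _) zero_le_one
        _ = 2 * K * t ^ (-(2 - α) / 2) := one_mul _
    have hval : (∫ t in Ioc (0:ℝ) s, 2 * K * t ^ (-(2 - α) / 2)) = 4 * K / α * r ^ α := by
      rw [← intervalIntegral.integral_of_le hspos.le, intervalIntegral.integral_const_mul,
        integral_rpow (Or.inl (by linarith))]
      have h0 : (0:ℝ) ^ (-(2 - α) / 2 + 1) = 0 := Real.zero_rpow (by intro hc; nlinarith)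
      rw [h0, sub_zero]
      have hs : s ^ (-(2 - α) / 2 + 1) = r ^ α := by
        rw [hsdef, ← Real.rpow_mul hrpos.le]
        congr 1
        ring
      rw [hs]
      have he : -(2 - α) / 2 + 1 = α / 2 := by ring
      rw [he]
      field_simp
      ring
    calc ‖∫ t in Ioc 0 s, f t‖ ≤ ∫ t in Ioc (0:ℝ) s, 2 * K * t ^ (-(2 - α) / 2) :=
          norm_integral_le_of_norm_le hmaj hbd
      _ = 4 * K / α * r ^ α := hval
  -- bound on Ioi s
  have h2 : ‖∫ t in Ioi s, f t‖ ≤ 2 * K / (1 - α) * r ^ α := by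
    have hmaj : IntegrableOn (fun t : ℝ => K * t ^ (-(3 - α) / 2) * r) (Ioi s) := by
      apply Integrable.mul_const
      apply Integrable.const_mul
      exact integrableOn_Ioi_rpow_of_lt (by linarith) hspos
    have hbd : ∀ᵐ t ∂(volume.restrict (Ioi s)), ‖f t‖ ≤ K * t ^ (-(3 - α) / 2) * r := by
      rw [ae_restrict_iff' measurableSet_Ioi]
      filter_upwards with t hts
      have ht0 : 0 < t := hspos.trans hts
      have : ‖f t‖ = exp (-(lam * t)) * ‖D₂ t (x + ι h) - D₂ t x‖ := by
        rw [hfdef]; simp [norm_smul, abs_of_pos (exp_pos _)]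
      rw [this]
      calc exp (-(lam * t)) * ‖D₂ t (x + ι h) - D₂ t x‖
          ≤ 1 * (K * t ^ (-(3 - α) / 2) * r) := by
            apply mul_le_mul (heb t ht0) (hb2 t ht0 x h) (norm_nonneg _) zero_le_one
        _ = K * t ^ (-(3 - α) / 2) * r := one_mul _
    have hval : (∫ t in Ioi s, K * t ^ (-(3 - α) / 2) * r) = 2 * K / (1 - α) * r ^ α := by
      simp_rw [mul_comm (K * _) r, ← mul_assoc]
      rw [MeasureTheory.integral_const_mul, integral_Ioi_rpow_of_lt (by linarith) hspos]
      have hs : s ^ (-(3 - α) / 2 + 1) = r ^ (α - 1) := by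
        rw [hsdef, ← Real.rpow_mul hrpos.le]
        congr 1
        ring
      rw [hs]
      have hr1 : r ^ α = r * r ^ (α - 1) := by
        have h' := Real.rpow_add hrpos 1 (α - 1)
        rw [Real.rpow_one] at h'
        rw [← h']
        congr 1
        ring
      rw [hr1]
      have he : -(3 - α) / 2 + 1 = (α - 1) / 2 := by ring
      rw [he]
      have hne : α - 1 ≠ 0 := by linarith
      have hne' : 1 - α ≠ 0 := by linarith
      field_simp
      ring
    calc ‖∫ t in Ioi s, f t‖ ≤ ∫ t in Ioi s, K * t ^ (-(3 - α) / 2) * r :=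
          norm_integral_le_of_norm_le hmaj hbd
      _ = 2 * K / (1 - α) * r ^ α := hval
  calc ‖(∫ t in Ioc 0 s, f t) + ∫ t in Ioi s, f t‖
      ≤ ‖∫ t in Ioc 0 s, f t‖ + ‖∫ t in Ioi s, f t‖ := norm_add_le _ _
    _ ≤ 4 * K / α * r ^ α + 2 * K / (1 - α) * r ^ α := add_le_add h1 h2
    _ = (4 * K / α + 2 * K / (1 - α)) * r ^ α := by ring
end

section
/- Zygmund splitting estimate: let K > 0 and suppose D : (0,∞) × X → L(H;ℝ) satisfies, for all x ∈ X, h ∈ H and t > 0: (a) ‖D(t,x+2h) − 2D(t,x+h) + D(t,x)‖ ≤ 4K t^{−1/2} and (b) ‖D(t,x+2h) − 2D(t,x+h) + D(t,x)‖ ≤ K t^{−3/2} ‖h‖_H². Then for u'(x) := ∫₀^∞ e^{−λt} D(t,x) dt with λ > 0, splitting at t = ‖h‖_H², one obtains the Zygmund bound ‖u'(x+2h) − 2u'(x+h) + u'(x)‖ ≤ 10K ‖h‖_H for all x ∈ X, h ∈ H. -/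
open Real MeasureTheory Set

/-- Zygmund splitting estimate. Let `K > 0`, `λ > 0`, and
`D : (0,∞) × X → L(H;ℝ)` satisfy, for all `x ∈ X`, `h ∈ H`, `t > 0`:
(a) `‖D(t,x+2h) − 2D(t,x+h) + D(t,x)‖ ≤ 4K t^{−1/2}` and
(b) `‖D(t,x+2h) − 2D(t,x+h) + D(t,x)‖ ≤ K t^{−3/2} ‖h‖²`, with the weighted integrands
integrable. Then `u'(x) := ∫₀^∞ e^{−λt} D(t,x) dt` satisfies the Zygmund bound
`‖u'(x+2h) − 2u'(x+h) + u'(x)‖ ≤ 10K ‖h‖` for all `x ∈ X`, `h ∈ H`. -/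
theorem stmt_14 {X H : Type*} [NormedAddCommGroup X] [InnerProductSpace ℝ X]
    [NormedAddCommGroup H] [InnerProductSpace ℝ H]
    (ι : H →ₗ[ℝ] X) (lam K : ℝ) (hlam : 0 < lam) (hK : 0 < K)
    (D : ℝ → X → (H →L[ℝ] ℝ))
    (hint : ∀ x : X, IntegrableOn (fun t => exp (-(lam * t)) • D t x) (Ioi 0))
    (hb1 : ∀ t : ℝ, 0 < t → ∀ (x : X) (h : H),
      ‖D t (x + 2 • ι h) - 2 • D t (x + ι h) + D t x‖ ≤ 4 * K * t ^ (-(1:ℝ)/2))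
    (hb2 : ∀ t : ℝ, 0 < t → ∀ (x : X) (h : H),
      ‖D t (x + 2 • ι h) - 2 • D t (x + ι h) + D t x‖ ≤ K * t ^ (-(3:ℝ)/2) * ‖h‖ ^ 2) :
    ∀ (x : X) (h : H),
      ‖(∫ t in Ioi (0:ℝ), exp (-(lam * t)) • D t (x + 2 • ι h)) -
          2 • (∫ t in Ioi (0:ℝ), exp (-(lam * t)) • D t (x + ι h)) +
          ∫ t in Ioi (0:ℝ), exp (-(lam * t)) • D t x‖ ≤ 10 * K * ‖h‖ := by
  intro x h
  rcases eq_or_lt_of_le (norm_nonneg h) with hr0 | hr0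
  · -- h = 0 case
    have hh : h = 0 := by simpa using hr0.symm
    subst hh
    simp [two_smul]
  set r : ℝ := ‖h‖ with hrdef
  have hA := hint (x + 2 • ι h)
  have hB := hint (x + ι h)
  have hC := hint x
  set f : ℝ → (H →L[ℝ] ℝ) := fun t =>
    exp (-(lam * t)) • (D t (x + 2 • ι h) - 2 • D t (x + ι h) + D t x) with hfdef
  have hfeq : ∀ t : ℝ, f t = exp (-(lam * t)) • D t (x + 2 • ι h)
      - 2 • (exp (-(lam * t)) • D t (x + ι h)) + exp (-(lam * t)) • D t x := by
    intro t
    show exp (-(lam * t)) • (D t (x + 2 • ι h) - 2 • D t (x + ι h) + D t x) = _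
    rw [smul_add, smul_sub, smul_comm]
  have hint2 : IntegrableOn (fun t => 2 • (exp (-(lam * t)) • D t (x + ι h))) (Ioi 0) := by
    have h2 := hB.smul (2:ℝ); simp only [two_smul] at h2 ⊢; exact h2
  have hf : IntegrableOn f (Ioi 0) := by
    exact MeasureTheory.IntegrableOn.congr_fun ((hA.sub hint2).add hC)
      (fun t _ => (hfeq t).symm) measurableSet_Ioi
  have hsplit : (∫ t in Ioi (0:ℝ), exp (-(lam * t)) • D t (x + 2 • ι h)) -
      2 • (∫ t in Ioi (0:ℝ), exp (-(lam * t)) • D t (x + ι h)) +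
      ∫ t in Ioi (0:ℝ), exp (-(lam * t)) • D t x = ∫ t in Ioi (0:ℝ), f t := by
    rw [setIntegral_congr_fun measurableSet_Ioi (fun t _ => hfeq t)]
    have hAB : IntegrableOn (fun t => exp (-(lam * t)) • D t (x + 2 • ι h)
        - 2 • (exp (-(lam * t)) • D t (x + ι h))) (Ioi 0) := hA.sub hint2
    rw [integral_add hAB hC, integral_sub hA hint2]
    congr 1
    congr 1
    simp only [two_smul]
    rw [integral_add hB hB]
  rw [hsplit]
  -- pointwise bounds on ‖f t‖
  have hnorm1 : ∀ t ∈ Ioc (0:ℝ) (r ^ 2), ‖f t‖ ≤ 4 * K * t ^ (-(1:ℝ)/2) := by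
    intro t ht
    have hsm : ‖f t‖ ≤ exp (-(lam * t)) * ‖D t (x + 2 • ι h) - 2 • D t (x + ι h) + D t x‖ := by
      have h2 := norm_smul_le (exp (-(lam * t)))
        (D t (x + 2 • ι h) - 2 • D t (x + ι h) + D t x)
      rwa [Real.norm_eq_abs, abs_of_pos (exp_pos _)] at h2
    calc ‖f t‖ ≤ exp (-(lam * t)) * ‖D t (x + 2 • ι h) - 2 • D t (x + ι h) + D t x‖ := hsm
      _ ≤ 1 * (4 * K * t ^ (-(1:ℝ)/2)) := by
          apply mul_le_mul _ (hb1 t ht.1 x h) (norm_nonneg _) zero_le_one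
          exact exp_le_one_iff.mpr (by nlinarith [ht.1])
      _ = 4 * K * t ^ (-(1:ℝ)/2) := one_mul _
  have hnorm2 : ∀ t ∈ Ioi (r ^ 2), ‖f t‖ ≤ K * t ^ (-(3:ℝ)/2) * r ^ 2 := by
    intro t ht
    have htpos : (0:ℝ) < t := lt_trans (by positivity) ht
    have hsm : ‖f t‖ ≤ exp (-(lam * t)) * ‖D t (x + 2 • ι h) - 2 • D t (x + ι h) + D t x‖ := by
      have h2 := norm_smul_le (exp (-(lam * t)))
        (D t (x + 2 • ι h) - 2 • D t (x + ι h) + D t x)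
      rwa [Real.norm_eq_abs, abs_of_pos (exp_pos _)] at h2
    calc ‖f t‖ ≤ exp (-(lam * t)) * ‖D t (x + 2 • ι h) - 2 • D t (x + ι h) + D t x‖ := hsm
      _ ≤ 1 * (K * t ^ (-(3:ℝ)/2) * r ^ 2) := by
          apply mul_le_mul _ (hb2 t htpos x h) (norm_nonneg _) zero_le_one
          exact exp_le_one_iff.mpr (by nlinarith)
      _ = K * t ^ (-(3:ℝ)/2) * r ^ 2 := one_mul _
  -- integrability of majorants
  have hg1 : IntegrableOn (fun t : ℝ => 4 * K * t ^ (-(1:ℝ)/2)) (Ioc 0 (r ^ 2)) := by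
    have : IntervalIntegrable (fun t : ℝ => t ^ (-(1:ℝ)/2)) volume 0 (r ^ 2) :=
      intervalIntegral.intervalIntegrable_rpow' (by norm_num)
    have h2 := (intervalIntegrable_iff_integrableOn_Ioc_of_le (by positivity)).mp this
    exact MeasureTheory.IntegrableOn.congr_fun (h2.const_mul (4 * K))
      (fun t _ => by ring) measurableSet_Ioc
  have hg2 : IntegrableOn (fun t : ℝ => K * t ^ (-(3:ℝ)/2) * r ^ 2) (Ioi (r ^ 2)) := by
    have h2 := integrableOn_Ioi_rpow_of_lt (a := -(3:ℝ)/2) (by norm_num)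
      (c := r ^ 2) (by positivity)
    exact MeasureTheory.IntegrableOn.congr_fun ((h2.const_mul K).mul_const (r ^ 2))
      (fun t _ => by ring) measurableSet_Ioi
  -- split the integral of the norm
  have hunion : Ioc (0:ℝ) (r ^ 2) ∪ Ioi (r ^ 2) = Ioi 0 :=
    Ioc_union_Ioi_eq_Ioi (by positivity)
  have hval1 : ∫ t in Ioc (0:ℝ) (r ^ 2), 4 * K * t ^ (-(1:ℝ)/2) = 8 * K * r := by
    rw [← intervalIntegral.integral_of_le (by positivity : (0:ℝ) ≤ r ^ 2)]
    rw [intervalIntegral.integral_const_mul]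
    rw [integral_rpow (Or.inl (by norm_num))]
    have : ((r : ℝ) ^ 2) ^ ((-(1:ℝ)/2) + 1) = r := by
      rw [← Real.rpow_natCast r 2, ← Real.rpow_mul (norm_nonneg h)]
      norm_num
      exact hrdef.symm
    rw [this]
    rw [Real.zero_rpow (by norm_num)]
    ring
  have hval2 : ∫ t in Ioi (r ^ 2), K * t ^ (-(3:ℝ)/2) * r ^ 2 = 2 * K * r := by
    have hpos : (0:ℝ) < r ^ 2 := by positivity
    have heq : ∀ t : ℝ, K * t ^ (-(3:ℝ)/2) * r ^ 2 = (K * r ^ 2) * t ^ (-(3:ℝ)/2) := by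
      intro t; ring
    simp only [heq]
    rw [integral_const_mul, integral_Ioi_rpow_of_lt (by norm_num) hpos]
    have : ((r : ℝ) ^ 2) ^ ((-(3:ℝ)/2) + 1) = r⁻¹ := by
      rw [← Real.rpow_natCast r 2, ← Real.rpow_mul (norm_nonneg h)]
      norm_num
      rw [Real.rpow_neg_one]
    rw [this]
    field_simp
    ring
  calc ‖∫ t in Ioi (0:ℝ), f t‖ ≤ ∫ t in Ioi (0:ℝ), ‖f t‖ := norm_integral_le_integral_norm _
    _ = (∫ t in Ioc (0:ℝ) (r ^ 2), ‖f t‖) + ∫ t in Ioi (r ^ 2), ‖f t‖ := by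
        rw [← hunion]
        exact setIntegral_union (Ioc_disjoint_Ioi le_rfl) measurableSet_Ioi
          (MeasureTheory.IntegrableOn.mono_set hf.norm (hunion ▸ subset_union_left))
          (MeasureTheory.IntegrableOn.mono_set hf.norm (hunion ▸ subset_union_right))
    _ ≤ (∫ t in Ioc (0:ℝ) (r ^ 2), 4 * K * t ^ (-(1:ℝ)/2)) +
        ∫ t in Ioi (r ^ 2), K * t ^ (-(3:ℝ)/2) * r ^ 2 := by
        apply add_le_add
        · exact setIntegral_mono_on (MeasureTheory.IntegrableOn.mono_set hf.norm (hunion ▸ subset_union_left)) hg1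
            measurableSet_Ioc hnorm1
        · exact setIntegral_mono_on (MeasureTheory.IntegrableOn.mono_set hf.norm (hunion ▸ subset_union_right)) hg2
            measurableSet_Ioi hnorm2
    _ = 10 * K * r := by rw [hval1, hval2]; ring
end
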